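/- arXiv:2008.05629 — 3 statements merged into one kernel-verified Lean document; each statement's English description precedes it below -/
import Mathlib

section
/- Parallel composition theorem for differential privacy: if mechanisms M_1,...,M_m each satisfy ε_i-differential privacy and each M_i operates on a disjoint subset of the dataset, then their parallel composition satisfies (max_{1≤i≤m} ε_i)-differential privacy. -/
open scoped ENNReal BigOperators

/-- A discrete mechanism `M` satisfies `ε`-differential privacy if for all
neighboring datasets and every set of outcomes `Ω`,
`Pr[M x ∈ Ω] ≤ e^ε * Pr[M x' ∈ Ω]`. -/
def DiffPrivate {D : Type*} {O : Type*} (Neighbor : D → D → Prop)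
    (M : D → O → ℝ≥0∞) (ε : ℝ) : Prop :=
  ∀ x x', Neighbor x x' → ∀ Ω : Set O,
    ∑' o : Ω, M x o ≤ ENNReal.ofReal (Real.exp ε) * ∑' o : Ω, M x' o

/-- Parallel composition theorem: the dataset is partitioned into
`m` disjoint subsets (component `i` taking values in `Di i`), and two full
datasets are neighboring when they differ in exactly one record, i.e. they
agree on all components except one, on which they are neighboring.  If each
mechanism `M i`, operating on its own disjoint subset, satisfies
`ε i`-differential privacy, then the parallel composition (releasing all the
`M i (x i)` with independent randomness) satisfies
`(max_{1≤i≤m} ε i)`-differential privacy. -/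
theorem parallel_composition
    (m : ℕ) (hm : 0 < m)
    (Di : Fin m → Type*) (NeighborI : ∀ i : Fin m, Di i → Di i → Prop)
    (O : Fin m → Type*) (M : ∀ i : Fin m, Di i → O i → ℝ≥0∞) (ε : Fin m → ℝ)
    (hEach : ∀ i : Fin m, DiffPrivate (NeighborI i) (M i) (ε i)) :
    DiffPrivate
      (fun x x' : ∀ i : Fin m, Di i =>
        ∃ j : Fin m, NeighborI j (x j) (x' j) ∧ ∀ i : Fin m, i ≠ j → x i = x' i)
      (fun x (o : ∀ i : Fin m, O i) => ∏ i : Fin m, M i (x i) (o i))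
      (Finset.univ.sup' (Finset.univ_nonempty_iff.mpr ⟨⟨0, hm⟩⟩) ε) := by
  intro x x' ⟨j, hnj, hagree⟩ Ω
  set E := Finset.univ.sup' (Finset.univ_nonempty_iff.mpr ⟨⟨0, hm⟩⟩) ε with hE
  have hεj : ε j ≤ E := Finset.le_sup' ε (Finset.mem_univ j)
  have hpt : ∀ o : ∀ i, O i,
      ∏ i, M i (x i) (o i) ≤ ENNReal.ofReal (Real.exp E) * ∏ i, M i (x' i) (o i) := by
    intro o
    have hsingle : M j (x j) (o j) ≤ ENNReal.ofReal (Real.exp (ε j)) * M j (x' j) (o j) := by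
      have := hEach j (x j) (x' j) hnj {o j}
      simpa [tsum_singleton] using this
    have h1 : ∏ i, M i (x i) (o i)
        = M j (x j) (o j) * ∏ i ∈ Finset.univ.erase j, M i (x i) (o i) :=
      (Finset.mul_prod_erase Finset.univ _ (Finset.mem_univ j)).symm
    have h2 : ∏ i, M i (x' i) (o i)
        = M j (x' j) (o j) * ∏ i ∈ Finset.univ.erase j, M i (x' i) (o i) :=
      (Finset.mul_prod_erase Finset.univ _ (Finset.mem_univ j)).symm
    have hrest : ∏ i ∈ Finset.univ.erase j, M i (x i) (o i)
        = ∏ i ∈ Finset.univ.erase j, M i (x' i) (o i) := by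
      refine Finset.prod_congr rfl fun i hi => ?_
      rw [hagree i (Finset.ne_of_mem_erase hi)]
    rw [h1, h2, hrest]
    calc M j (x j) (o j) * ∏ i ∈ Finset.univ.erase j, M i (x' i) (o i)
        ≤ (ENNReal.ofReal (Real.exp (ε j)) * M j (x' j) (o j)) *
            ∏ i ∈ Finset.univ.erase j, M i (x' i) (o i) :=
          mul_le_mul_left hsingle _
      _ ≤ (ENNReal.ofReal (Real.exp E) * M j (x' j) (o j)) *
            ∏ i ∈ Finset.univ.erase j, M i (x' i) (o i) := by gcongr
      _ = ENNReal.ofReal (Real.exp E) * (M j (x' j) (o j) *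
            ∏ i ∈ Finset.univ.erase j, M i (x' i) (o i)) := by ring
  calc ∑' o : Ω, ∏ i, M i (x (i : Fin m)) ((o : ∀ i, O i) i)
      ≤ ∑' o : Ω, ENNReal.ofReal (Real.exp E) * ∏ i, M i (x' i) ((o : ∀ i, O i) i) :=
        ENNReal.tsum_le_tsum fun o => hpt o
    _ = ENNReal.ofReal (Real.exp E) * ∑' o : Ω, ∏ i, M i (x' i) ((o : ∀ i, O i) i) :=
        ENNReal.tsum_mul_left
end

section
/- If two random variables Y and Z on the same domain satisfy D_∞(Y||Z) ≤ ε and D_∞(Z||Y) ≤ ε, then the KL-divergence satisfies D(Y||Z) ≤ ε·(e^ε − 1). -/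
open scoped BigOperators

/-- let `Y` and `Z` be random variables on the same finite domain
`α`, with (everywhere positive) probability mass functions `p` and `q`.  If the
max divergences satisfy `D_∞(Y‖Z) ≤ ε` and `D_∞(Z‖Y) ≤ ε`, i.e. for every set
`S` of outcomes, `ln (Pr[Y∈S] / Pr[Z∈S]) ≤ ε` and `ln (Pr[Z∈S] / Pr[Y∈S]) ≤ ε`,
then the KL-divergence satisfies
`D(Y‖Z) = ∑ a, p a * ln (p a / q a) ≤ ε * (e^ε − 1)`. -/
theorem kl_le_of_max_divergence_le
    {α : Type*} [Fintype α] (p q : α → ℝ) (ε : ℝ)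
    (hp : ∀ a, 0 < p a) (hq : ∀ a, 0 < q a)
    (hpsum : ∑ a, p a = 1) (hqsum : ∑ a, q a = 1)
    (hYZ : ∀ S : Finset α,
      Real.log ((∑ a ∈ S, p a) / (∑ a ∈ S, q a)) ≤ ε)
    (hZY : ∀ S : Finset α,
      Real.log ((∑ a ∈ S, q a) / (∑ a ∈ S, p a)) ≤ ε) :
    ∑ a, p a * Real.log (p a / q a) ≤ ε * (Real.exp ε - 1) := by
  have hεnn : 0 ≤ ε := by
    have := hYZ Finset.univ
    rw [hpsum, hqsum] at this
    simpa using this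
  set c : α → ℝ := fun a => Real.log (p a / q a) with hc
  have hcub : ∀ a, c a ≤ ε := fun a => by
    have := hYZ {a}; simpa using this
  have hclb : ∀ a, -ε ≤ c a := fun a => by
    have h := hZY {a}
    simp only [Finset.sum_singleton] at h
    have : Real.log (q a / p a) = - c a := by
      simp only [hc]
      rw [Real.log_div (hq a).ne' (hp a).ne', Real.log_div (hp a).ne' (hq a).ne']
      ring
    linarith [this ▸ h]
  have hpq : ∀ a, p a ≤ Real.exp ε * q a := fun a => by
    have h1 : p a / q a = Real.exp (c a) := (Real.exp_log (div_pos (hp a) (hq a))).symm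
    have h2 : Real.exp (c a) ≤ Real.exp ε := Real.exp_le_exp.mpr (hcub a)
    have := (div_le_iff₀ (hq a)).mp (h1 ▸ h2)
    linarith
  have hqp : ∀ a, q a ≤ Real.exp ε * p a := fun a => by
    have h1 : q a / p a = Real.exp (-c a) := by
      rw [← Real.exp_log (div_pos (hq a) (hp a))]
      congr 1
      simp only [hc]
      rw [Real.log_div (hq a).ne' (hp a).ne', Real.log_div (hp a).ne' (hq a).ne']
      ring
    have h2 : Real.exp (-c a) ≤ Real.exp ε := Real.exp_le_exp.mpr (by linarith [hclb a])
    have := (div_le_iff₀ (hp a)).mp (h1 ▸ h2)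
    linarith
  -- Gibbs: ∑ q a * (- c a) ≥ 0, i.e. ∑ q a * c a ≤ 0
  have gibbs : ∑ a, q a * c a ≤ 0 := by
    have h1 : ∀ a, q a * c a ≤ p a - q a := fun a => by
      have hlog : c a ≤ p a / q a - 1 := Real.log_le_sub_one_of_pos (div_pos (hp a) (hq a))
      have := mul_le_mul_of_nonneg_left hlog (hq a).le
      calc q a * c a ≤ q a * (p a / q a - 1) := this
        _ = p a - q a := by rw [mul_sub, mul_div_cancel₀ _ (hq a).ne', mul_one]
    calc ∑ a, q a * c a ≤ ∑ a, (p a - q a) := Finset.sum_le_sum fun a _ => h1 a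
      _ = 0 := by rw [Finset.sum_sub_distrib, hpsum, hqsum]; ring
  have key : ∀ a, (p a - q a) * c a ≤ ε * (Real.exp ε - 1) * p a := fun a => by
    have h1 : (p a - q a) * c a ≤ |p a - q a| * ε := by
      calc (p a - q a) * c a ≤ |(p a - q a) * c a| := le_abs_self _
        _ = |p a - q a| * |c a| := abs_mul _ _
        _ ≤ |p a - q a| * ε := by
            apply mul_le_mul_of_nonneg_left _ (abs_nonneg _)
            exact abs_le.mpr ⟨hclb a, hcub a⟩
    have h2 : |p a - q a| ≤ (Real.exp ε - 1) * p a := by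
      rcases le_total (q a) (p a) with h | h
      · rw [abs_of_nonneg (by linarith)]
        have := hpq a
        nlinarith [hq a, hp a]
      · rw [abs_of_nonpos (by linarith)]
        have := hqp a
        nlinarith [hp a]
    calc (p a - q a) * c a ≤ |p a - q a| * ε := h1
      _ ≤ (Real.exp ε - 1) * p a * ε := mul_le_mul_of_nonneg_right h2 hεnn
      _ = ε * (Real.exp ε - 1) * p a := by ring
  calc ∑ a, p a * c a ≤ ∑ a, p a * c a - ∑ a, q a * c a := by linarith
    _ = ∑ a, (p a - q a) * c a := by rw [← Finset.sum_sub_distrib]; congr 1; ext a; ring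
    _ ≤ ∑ a, ε * (Real.exp ε - 1) * p a := Finset.sum_le_sum fun a _ => key a
    _ = ε * (Real.exp ε - 1) := by rw [← Finset.mul_sum, hpsum, mul_one]
end

section
/- The Laplace mechanism satisfies ε-differential privacy: for a query f with sensitivity ΔS (i.e., |f(D)−f(D')| ≤ ΔS for all neighboring D, D'), the mechanism M(D) = f(D) + Lap(ΔS/ε) satisfies that for all neighboring D, D' and all measurable sets Ω, Pr[M(D)∈Ω] ≤ e^ε·Pr[M(D')∈Ω]. -/
open scoped BigOperators

/-- The density of the Laplace mechanism output at `y`, on dataset `x`: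
`f x + Lap(ΔS/ε)` has density `(1/(2b))·exp(−|y − f x|/b)` with `b = ΔS/ε`,
i.e. `(ε/(2ΔS))·exp(−|y − f x|·ε/ΔS)`. -/
noncomputable def laplaceDensity {D : Type*} (f : D → ℝ) (ΔS ε : ℝ)
    (x : D) (y : ℝ) : ℝ :=
  ε / (2 * ΔS) * Real.exp (-|y - f x| * ε / ΔS)

/-!
By the triangle inequality, moving the centre of a Laplace density of scale `ΔS/ε` by at most
`ΔS` changes its value at every point by a factor of at most `e^ε`; integrating this pointwise
bound over `Ω` gives the claim.
-/

open MeasureTheory Set Real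

lemma integrable_exp_neg_mul_abs {c : ℝ} (hc : 0 < c) :
    Integrable fun y : ℝ => exp (-(c * |y|)) := by
  rw [← integrableOn_univ, ← Iic_union_Ioi (a := 0), integrableOn_union]
  constructor
  · refine (integrableOn_exp_mul_Iic hc 0).congr_fun (fun y hy => ?_) measurableSet_Iic
    rw [abs_of_nonpos hy, mul_neg, neg_neg]
  · refine (integrableOn_exp_mul_Ioi (neg_neg_of_pos hc) 0).congr_fun (fun y hy => ?_)
      measurableSet_Ioi
    beta_reduce
    rw [abs_of_pos hy, neg_mul]

section Laplace

variable {D : Type*} (f : D → ℝ) {ΔS ε : ℝ}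

lemma integrable_laplaceDensity (hΔS : 0 < ΔS) (hε : 0 < ε) (x : D) :
    Integrable (laplaceDensity f ΔS ε x) := by
  have h := ((integrable_exp_neg_mul_abs (div_pos hε hΔS)).comp_sub_right (f x)).const_mul
    (ε / (2 * ΔS))
  convert h using 1
  funext y
  unfold laplaceDensity
  ring_nf

lemma laplaceDensity_nonneg (hΔS : 0 ≤ ΔS) (hε : 0 ≤ ε) (x : D) (y : ℝ) :
    0 ≤ laplaceDensity f ΔS ε x y := by
  unfold laplaceDensity
  positivity

lemma exp_neg_abs_sub_mul_le (a b y : ℝ) {t : ℝ} (ht : 0 ≤ t) :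
    exp (-|y - a| * t) ≤ exp (|a - b| * t) * exp (-|y - b| * t) := by
  rw [← exp_add, exp_le_exp]
  have htriangle : |y - b| ≤ |y - a| + |a - b| := abs_sub_le y a b
  nlinarith

lemma laplaceDensity_le_exp_mul {x x' : D} (hΔS : 0 < ΔS) (hε : 0 ≤ ε)
    (hxx' : |f x - f x'| ≤ ΔS) (y : ℝ) :
    laplaceDensity f ΔS ε x y ≤ exp ε * laplaceDensity f ΔS ε x' y := by
  have hscale : 0 ≤ ε / ΔS := div_nonneg hε hΔS.le
  have hshift : exp (|f x - f x'| * (ε / ΔS)) ≤ exp ε := by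
    rw [exp_le_exp]
    calc |f x - f x'| * (ε / ΔS) ≤ ΔS * (ε / ΔS) := mul_le_mul_of_nonneg_right hxx' hscale
      _ = ε := mul_div_cancel₀ ε hΔS.ne'
  unfold laplaceDensity
  simp only [mul_div_assoc]
  rw [mul_left_comm]
  gcongr
  exact (exp_neg_abs_sub_mul_le (f x) (f x') y hscale).trans
    (mul_le_mul_of_nonneg_right hshift (exp_pos _).le)

end Laplace

/-- the Laplace mechanism satisfies `ε`-differential privacy:
for a query `f` with sensitivity `ΔS` (i.e. `|f x − f x'| ≤ ΔS` for all
neighboring `x, x'`), the mechanism `M x = f x + Lap(ΔS/ε)` satisfies that for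
all neighboring `x, x'` and all measurable sets `Ω`,
`Pr[M x ∈ Ω] ≤ e^ε · Pr[M x' ∈ Ω]`. -/
theorem laplace_mechanism_private
    {D : Type*} (Neighbor : D → D → Prop) (f : D → ℝ) (ΔS ε : ℝ)
    (hΔS : 0 < ΔS) (hε : 0 < ε)
    (hsens : ∀ x x', Neighbor x x' → |f x - f x'| ≤ ΔS) :
    ∀ x x', Neighbor x x' → ∀ Ω : Set ℝ, MeasurableSet Ω →
      (∫ y in Ω, laplaceDensity f ΔS ε x y)
        ≤ Real.exp ε * ∫ y in Ω, laplaceDensity f ΔS ε x' y := by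
  intro x x' hN Ω _
  calc (∫ y in Ω, laplaceDensity f ΔS ε x y)
      ≤ ∫ y in Ω, exp ε * laplaceDensity f ΔS ε x' y :=
        integral_mono_of_nonneg (ae_of_all _ (laplaceDensity_nonneg f hΔS.le hε.le x))
          ((integrable_laplaceDensity f hΔS hε x').const_mul _).integrableOn
          (ae_of_all _ (laplaceDensity_le_exp_mul f hΔS hε.le (hsens x x' hN)))
    _ = exp ε * ∫ y in Ω, laplaceDensity f ΔS ε x' y := integral_const_mul _ _
end
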